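/- arXiv:0908.1946 — 3 statements merged into one kernel-verified Lean document; each statement's English description precedes it below -/
import Mathlib

section
/- Let G be a star graph on n vertices with e edges, and let I(G) be its edge ideal in k[x_1,...,x_n]. Then the dimension over k of the degree-3 component of I(G) equals ne + e/2 - e²/2, i.e., 2·dim_k I(G)_3 = 2ne + e - e². -/
open Finset MvPolynomial
open scoped Classical

/-!
The edge ideal is a monomial ideal, so its degree-3 part has as basis the degree-3 monomials
divisible by a generator `x_v x_i`, `i` a neighbour of the centre `v`. Dividing by `x_v` matches
these with the degree-2 monomials that involve some neighbour of `v`: all `C(n + 1, 2)` degree-2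
monomials minus the `C(n - e + 1, 2)` in the variables outside the neighbourhood.
-/

namespace MvPolynomial

variable {σ R : Type*} [CommSemiring R]

theorem restrictScalars_span_monomial_eq_restrictSupport (S : Set (σ →₀ ℕ)) :
    (Ideal.span ((monomial · (1 : R)) '' S)).restrictScalars R =
      restrictSupport R {m | ∃ s ∈ S, s ≤ m} := by
  ext p
  rw [Submodule.restrictScalars_mem, mem_ideal_span_monomial_image, mem_restrictSupport_iff]
  rfl

theorem restrictSupport_inf (s t : Set (σ →₀ ℕ)) :
    restrictSupport R s ⊓ restrictSupport R t = restrictSupport R (s ∩ t) :=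
  Submodule.ext fun _ => by
    simp only [Submodule.mem_inf, mem_restrictSupport_iff, Set.subset_inter_iff]

theorem finrank_restrictSupport {k : Type*} [Field k] (s : Set (σ →₀ ℕ)) :
    Module.finrank k (restrictSupport k s) = s.ncard :=
  Module.finrank_eq_nat_card_basis (basisRestrictSupport k s)

theorem finrank_span_monomial_inf_homogeneousSubmodule {k : Type*} [Field k]
    (S : Set (σ →₀ ℕ)) (d : ℕ) :
    Module.finrank k ↥((Ideal.span ((monomial · (1 : k)) '' S)).restrictScalars k ⊓
        homogeneousSubmodule σ k d) =
      {m : σ →₀ ℕ | (∃ s ∈ S, s ≤ m) ∧ m.degree = d}.ncard := by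
  rw [restrictScalars_span_monomial_eq_restrictSupport, homogeneousSubmodule_eq_finsupp_supported,
    ← restrictSupport, restrictSupport_inf, finrank_restrictSupport]
  rfl

theorem setOf_X_mul_X_eq_image_monomial (r : σ → σ → Prop) :
    {p : MvPolynomial σ R | ∃ i j, r i j ∧ p = X i * X j} =
      (monomial · 1) '' {s | ∃ i j, r i j ∧ s = Finsupp.single i 1 + Finsupp.single j 1} := by
  ext p
  simp only [Set.mem_ofPred_eq, Set.mem_image]
  constructor
  · rintro ⟨i, j, hij, rfl⟩
    exact ⟨_, ⟨i, j, hij, rfl⟩, by simp [X, monomial_mul]⟩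
  · rintro ⟨s, ⟨i, j, hij, rfl⟩, rfl⟩
    exact ⟨i, j, hij, by simp [X, monomial_mul]⟩

end MvPolynomial

namespace Finsupp

variable {σ : Type*}

theorem setOf_single_add_single_le_eq_image_add_single (v : σ) (N : Finset σ) (d : ℕ) :
    {m : σ →₀ ℕ | (∃ i ∈ N, single v 1 + single i 1 ≤ m) ∧ m.degree = d + 1} =
      (· + single v 1) '' {m | (∃ i ∈ N, single i 1 ≤ m) ∧ m.degree = d} := by
  ext m
  simp only [Set.mem_ofPred_eq, Set.mem_image]
  constructor
  · rintro ⟨⟨i, hi, hle⟩, hdeg⟩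
    have hv : single v 1 ≤ m := le_trans le_self_add hle
    refine ⟨m - single v 1, ⟨⟨i, hi, (le_tsub_iff_left hv).2 hle⟩, ?_⟩,
      tsub_add_cancel_of_le hv⟩
    have := congrArg degree (tsub_add_cancel_of_le hv)
    rw [map_add, degree_single] at this
    omega
  · rintro ⟨m, ⟨⟨i, hi, hle⟩, hdeg⟩, rfl⟩
    refine ⟨⟨i, hi, ?_⟩, by rw [map_add, degree_single, hdeg]⟩
    rw [add_comm (single v 1)]
    exact add_le_add_left hle _

theorem setOf_exists_single_le_eq_finsuppAntidiag_sdiff [Fintype σ] (N : Finset σ) (d : ℕ) :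
    {m : σ →₀ ℕ | (∃ i ∈ N, single i 1 ≤ m) ∧ m.degree = d} =
      ↑(univ.finsuppAntidiag d \ Nᶜ.finsuppAntidiag d) := by
  ext m
  simp only [Set.mem_ofPred_eq, coe_sdiff, Set.mem_sdiff, mem_coe, mem_finsuppAntidiag,
    subset_univ, and_true, single_le_iff, ← degree_eq_sum]
  rw [and_comm]
  refine and_congr_right fun hdeg => ⟨?_, fun h => ?_⟩
  · rintro ⟨i, hi, hmi⟩ ⟨_, hsupp⟩
    exact mem_compl.1 (hsupp (mem_support_iff.2 (by omega))) hi
  · by_contra! hN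
    have hsupp : m.support ⊆ Nᶜ := fun i hi =>
      mem_compl.2 fun hiN => mem_support_iff.1 hi (by have := hN i hiN; omega)
    refine h ⟨?_, hsupp⟩
    rw [← hdeg, degree_apply]
    exact (sum_subset hsupp fun i _ hi => notMem_support_iff.1 hi).symm

theorem ncard_setOf_exists_single_add_single_le [Fintype σ] (v : σ) (N : Finset σ) (d : ℕ) :
    {m : σ →₀ ℕ | (∃ i ∈ N, single v 1 + single i 1 ≤ m) ∧ m.degree = d + 1}.ncard +
        (Fintype.card σ - #N + d - 1).choose d = (Fintype.card σ + d - 1).choose d := by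
  rw [setOf_single_add_single_le_eq_image_add_single,
    Set.ncard_image_of_injective _ (add_left_injective _),
    setOf_exists_single_le_eq_finsuppAntidiag_sdiff, Set.ncard_coe_finset, ← card_compl,
    ← card_univ, ← card_finsuppAntidiag_nat_eq_choose, ← card_finsuppAntidiag_nat_eq_choose,
    card_sdiff_add_card_eq_card (finsuppAntidiag_mono (subset_univ _) _)]

end Finsupp

namespace SimpleGraph

variable {V : Type*} {G : SimpleGraph V} {v : V}

theorem card_edgeFinset_eq_degree_of_forall_adj [Fintype V] [DecidableRel G.Adj]
    (hstar : ∀ a b, G.Adj a b → a = v ∨ b = v) : #G.edgeFinset = G.degree v := by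
  rw [← card_incidenceFinset_eq_degree, incidenceFinset_eq_filter, filter_true_of_mem]
  intro e he
  induction e using Sym2.ind with
  | _ a b => rcases hstar a b (mem_edgeFinset.1 he) with rfl | rfl <;> simp

theorem exists_adj_single_add_single_le_iff [Fintype V] [DecidableRel G.Adj]
    (hstar : ∀ a b, G.Adj a b → a = v ∨ b = v) (m : V →₀ ℕ) :
    (∃ s ∈ {s | ∃ i j, G.Adj i j ∧ s = Finsupp.single i 1 + Finsupp.single j 1},
        s ≤ m) ↔
      ∃ i ∈ G.neighborFinset v, Finsupp.single v 1 + Finsupp.single i 1 ≤ m := by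
  simp only [Set.mem_ofPred_eq, mem_neighborFinset]
  constructor
  · rintro ⟨_, ⟨i, j, hij, rfl⟩, hle⟩
    rcases hstar i j hij with rfl | rfl
    · exact ⟨j, hij, hle⟩
    · exact ⟨i, hij.symm, by rwa [add_comm]⟩
  · rintro ⟨i, hi, hle⟩
    exact ⟨_, ⟨v, i, hi, rfl⟩, hle⟩

end SimpleGraph

/-- For a star graph `G` on `n` vertices with `e` edges, the degree-3 component of its
edge ideal satisfies `2·dim_k I(G)₃ = 2ne + e - e²`. -/
theorem star_edge_ideal_degree_three_dimension (k : Type*) [Field k] (n : ℕ)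
    (G : SimpleGraph (Fin n)) [DecidableRel G.Adj] (v : Fin n)
    (hstar : ∀ a b : Fin n, G.Adj a b → a = v ∨ b = v)
    (e : ℕ) (he : e = G.edgeFinset.card)
    (I : Ideal (MvPolynomial (Fin n) k))
    (hI : I = Ideal.span {m | ∃ i j, G.Adj i j ∧ m = X i * X j}) :
    (2 : ℤ) * (Module.finrank k
        ↥(Submodule.restrictScalars k I ⊓ homogeneousSubmodule (Fin n) k 3) : ℤ)
      = 2 * n * e + e - e ^ 2 := by
  have heN : e = #(G.neighborFinset v) := by
    rw [he, SimpleGraph.card_edgeFinset_eq_degree_of_forall_adj hstar,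
      SimpleGraph.card_neighborFinset_eq_degree]
  have hen : e ≤ n := heN ▸ (card_le_univ _).trans_eq (Fintype.card_fin n)
  have hcount := Finsupp.ncard_setOf_exists_single_add_single_le v (G.neighborFinset v) 2
  rw [Fintype.card_fin, ← heN] at hcount
  rw [hI, setOf_X_mul_X_eq_image_monomial, finrank_span_monomial_inf_homogeneousSubmodule]
  simp_rw [SimpleGraph.exists_adj_single_add_single_le_iff hstar]
  obtain ⟨r, rfl⟩ := Nat.exists_eq_add_of_le' hen
  simp only [Nat.add_sub_cancel, Nat.add_succ_sub_one, Nat.reduceAdd] at hcount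
  have hr := Nat.add_one_mul_choose_eq r 1
  have hre := Nat.add_one_mul_choose_eq (r + e) 1
  simp only [Nat.choose_one_right, Nat.reduceAdd] at hr hre
  apply_fun ((↑) : ℕ → ℤ) at hcount hr hre
  push_cast at hcount hr hre ⊢
  linear_combination 2 * hcount + hr - hre
end

section
/- For any nonnegative integer a with d-th Macaulay representation a = C(b_d,d) + ... + C(b_1,1), the Kruskal–Katona pseudo-power a^{(d)} = C(b_d, d+1) + ... + C(b_1, 2) satisfies: iterating a ↦ a^{(d)} with increasing d starting from any a eventually reaches 0; that is, defining s_1 = a and s_{i+1} = s_i^{(i+1)}, there exists k with s_i = 0 for all i > k. -/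
/-- `b` is the `d`-th Macaulay representation of `a`:
`a = ∑_{i=1}^{d} C(b_i, i)` with `b_d > ⋯ > b_1 ≥ 0`. -/
def IsMacaulayRep (d a : ℕ) (b : Fin d → ℕ) : Prop :=
  StrictMono b ∧ a = ∑ i : Fin d, (b i).choose ((i : ℕ) + 1)

/-- `c` is the `d`-th Kruskal–Katona pseudo-power `a^{(d)}` of `a`. -/
def IsKKPow (d a c : ℕ) : Prop :=
  ∃ b : Fin d → ℕ, IsMacaulayRep d a b ∧ c = ∑ i : Fin d, (b i).choose ((i : ℕ) + 2)

/-!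
By Pascal's rule and induction on `d`, for strictly increasing `b : Fin (d + 1) → ℕ` the sum
`∑ C(b_j, j + k + 1)` is `0` or `< C(b_d + 1, d + k + 1)`. With `k = 1`, comparing with the top
term `C(b'_{i+1}, i + 2) ≤ s (i + 1)` of the next representation `b'` gives
`b'_{i+1} ≤ max b_i (i + 1)`, so the top coefficient at degree `i + 1` is at most `max M i`,
`M` being the first one. Once `i ≥ M`, the case `k = 0` shows that `s i < C(i + 1, i + 1) = 1`.
-/

theorem Nat.choose_succ_eq_zero_or_lt (n m : ℕ) :
    n.choose (m + 1) = 0 ∨ n.choose (m + 1) < (n + 1).choose (m + 1) := by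
  by_cases h : m ≤ n
  · right
    rw [Nat.choose_succ_succ']
    have := Nat.choose_pos h
    omega
  · exact Or.inl (Nat.choose_eq_zero_of_lt (by omega))

theorem StrictMono.sum_choose_eq_zero_or_lt {d : ℕ} (k : ℕ) {b : Fin (d + 1) → ℕ}
    (hb : StrictMono b) :
    ∑ j, (b j).choose (j + k + 1) = 0 ∨
      ∑ j, (b j).choose (j + k + 1) < (b (Fin.last d) + 1).choose (d + k + 1) := by
  induction d with
  | zero => simpa using Nat.choose_succ_eq_zero_or_lt (b 0) k
  | succ d ih =>
    have hprev : b (Fin.last d).castSucc < b (Fin.last (d + 1)) := hb (Fin.castSucc_lt_last _)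
    rw [Fin.sum_univ_castSucc]
    simp only [Fin.val_castSucc, Fin.val_last]
    rcases ih (b := fun j => b j.castSucc) (hb.comp Fin.strictMono_castSucc) with hzero | hlt
    · rw [hzero, zero_add]
      exact Nat.choose_succ_eq_zero_or_lt _ _
    · right
      have hmono : (b (Fin.last d).castSucc + 1).choose (d + k + 1) ≤
          (b (Fin.last (d + 1))).choose (d + k + 1) :=
        Nat.choose_le_choose _ hprev
      have hpascal := Nat.choose_succ_succ' (b (Fin.last (d + 1))) (d + k + 1)
      rw [show d + 1 + k + 1 = d + k + 1 + 1 by omega]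
      omega

namespace IsMacaulayRep

variable {d a : ℕ} {b : Fin (d + 1) → ℕ}

theorem choose_last_le (hb : IsMacaulayRep (d + 1) a b) :
    (b (Fin.last d)).choose (d + 1) ≤ a := by
  rw [hb.2]
  exact Finset.single_le_sum (f := fun j : Fin (d + 1) => (b j).choose (j + 1))
    (fun _ _ => Nat.zero_le _) (Finset.mem_univ (Fin.last d))

theorem eq_zero_of_last_le (hb : IsMacaulayRep (d + 1) a b) (hlast : b (Fin.last d) ≤ d) :
    a = 0 := by
  have hle : (b (Fin.last d) + 1).choose (d + 1) ≤ 1 :=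
    (Nat.choose_le_choose _ (Nat.succ_le_succ hlast)).trans (Nat.choose_self _).le
  have hsum := hb.1.sum_choose_eq_zero_or_lt 0
  simp only [add_zero] at hsum
  rw [hb.2]
  rcases hsum with h | h <;> omega

theorem last_le_max_of_pseudoPower {c : ℕ} {b' : Fin (d + 2) → ℕ}
    (hb : IsMacaulayRep (d + 1) a b) (hc : c = ∑ j, (b j).choose (j + 2))
    (hb' : IsMacaulayRep (d + 2) c b') :
    b' (Fin.last (d + 1)) ≤ max (b (Fin.last d)) (d + 1) := by
  have hlow : (b' (Fin.last (d + 1))).choose (d + 2) ≤ ∑ j, (b j).choose (j + 1 + 1) :=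
    hc ▸ hb'.choose_last_le
  rcases hb.1.sum_choose_eq_zero_or_lt 1 with hzero | hlt
  · have := Nat.choose_eq_zero_iff.mp (Nat.le_zero.mp (hzero ▸ hlow))
    omega
  · have := (Nat.choose_mono (d + 2)).reflect_lt (hlow.trans_lt hlt)
    omega

end IsMacaulayRep

theorem kk_pseudo_power_iteration_vanishes_general (s : ℕ → ℕ)
    (hstep : ∀ i : ℕ, 1 ≤ i → IsKKPow (i + 1) (s i) (s (i + 1))) :
    ∃ k : ℕ, ∀ i : ℕ, k < i → s i = 0 := by
  obtain ⟨b₁, hb₁, hnext₁⟩ := hstep 1 le_rfl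
  set M := b₁ (Fin.last 1)
  have hbound : ∀ i, 1 ≤ i → ∃ b : Fin (i + 1) → ℕ, IsMacaulayRep (i + 1) (s i) b ∧
      s (i + 1) = ∑ j, (b j).choose (j + 2) ∧ b (Fin.last i) ≤ max M i := by
    intro i hi
    induction i, hi using Nat.le_induction with
    | base => exact ⟨b₁, hb₁, hnext₁, le_max_left _ _⟩
    | succ i hi ih =>
      obtain ⟨b, hb, hnext, hlast⟩ := ih
      obtain ⟨b', hb', hnext'⟩ := hstep (i + 1) (by omega)
      refine ⟨b', hb', hnext', ?_⟩
      have := hb.last_le_max_of_pseudoPower hnext hb'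
      omega
  refine ⟨M, fun i hi => ?_⟩
  obtain ⟨b, hb, -, hlast⟩ := hbound i (by omega)
  exact hb.eq_zero_of_last_le (by omega)

/-- Iterating the Kruskal–Katona pseudo-power with increasing degree eventually
reaches 0: if `s 1 = a` and `s (i+1) = (s i)^{(i+1)}` for all `i ≥ 1`, then there
is a `k` with `s i = 0` for all `i > k`. -/
theorem kk_pseudo_power_iteration_vanishes (a : ℕ) (s : ℕ → ℕ) (h1 : s 1 = a)
    (hstep : ∀ i : ℕ, 1 ≤ i → IsKKPow (i + 1) (s i) (s (i + 1))) :
    ∃ k : ℕ, ∀ i : ℕ, k < i → s i = 0 :=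
  kk_pseudo_power_iteration_vanishes_general s hstep
end

section
/- Let G be a simple graph on n vertices with e edges, and suppose for some vertex v of degree d ≥ 1 that (d-1)(e-d) + |E(G \ N(v))| = 0. If additionally every vertex of G has degree 0, 1, or e, and e ≥ 2, then G has a vertex of degree e. -/
open Finset
open scoped Classical

/-!
Since `d ≤ e`, the hypothesis forces `d = e` (then `v` itself works) or `d = 1`. In the latter
case let `w` be the unique neighbour of `v`. As `E(G \ N(v))` is empty, every edge meets `v`
or `w`, and the edge `vw` meets both, so `e + 1 ≤ deg v + deg w = 1 + deg w`; hence
`deg w ≥ e ≥ 2`, which leaves only `deg w = e`.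
-/

namespace SimpleGraph

variable {V : Type*} [Fintype V] [DecidableEq V] (G : SimpleGraph V) [DecidableRel G.Adj]

theorem card_edgeFinset_lt_degree_add_degree {a b : V} (hab : G.Adj a b)
    (hcover : ∀ ed ∈ G.edgeFinset, a ∈ ed ∨ b ∈ ed) :
    #G.edgeFinset < G.degree a + G.degree b := by
  have hsub : G.edgeFinset ⊆ G.incidenceFinset a ∪ G.incidenceFinset b := fun ed hed => by
    simpa [mem_incidenceFinset, incidenceSet, mem_edgeFinset.mp hed] using hcover ed hed
  have hshared : s(a, b) ∈ G.incidenceFinset a ∩ G.incidenceFinset b := by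
    simp [mem_incidenceFinset, incidenceSet, hab]
  calc #G.edgeFinset
      < #G.edgeFinset + #(G.incidenceFinset a ∩ G.incidenceFinset b) :=
        Nat.lt_add_of_pos_right (card_pos.mpr ⟨_, hshared⟩)
    _ ≤ #(G.incidenceFinset a ∪ G.incidenceFinset b)
          + #(G.incidenceFinset a ∩ G.incidenceFinset b) :=
        Nat.add_le_add_right (card_le_card hsub) _
    _ = G.degree a + G.degree b := by
        rw [card_union_add_card_inter, card_incidenceFinset_eq_degree,
          card_incidenceFinset_eq_degree]

end SimpleGraph

/-- If `G` has `e ≥ 2` edges, every vertex has degree `0`, `1` or `e`, and for some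
vertex `v` of degree `d ≥ 1` one has `(d-1)(e-d) + |E(G \ N(v))| = 0`, then `G` has
a vertex of degree `e`. -/
theorem exists_degree_e_vertex {V : Type*} [Fintype V] [DecidableEq V]
    (G : SimpleGraph V) [DecidableRel G.Adj] (e : ℕ) (he : e = G.edgeFinset.card)
    (v : V) (d : ℕ) (hd : d = G.degree v) (hd1 : 1 ≤ d)
    (hzero : (d - 1) * (e - d)
        + (G.edgeFinset.filter (fun ed => ∀ x ∈ ed, x ≠ v ∧ ¬ G.Adj v x)).card = 0)
    (hdeg : ∀ u : V, G.degree u = 0 ∨ G.degree u = 1 ∨ G.degree u = e)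
    (he2 : 2 ≤ e) :
    ∃ u : V, G.degree u = e := by
  obtain ⟨hprod, hfar⟩ := Nat.add_eq_zero_iff.mp hzero
  have hde : d ≤ e := hd ▸ he ▸ G.degree_le_card_edgeFinset v
  rcases Nat.mul_eq_zero.mp hprod with hd_one | he_le
  · obtain ⟨w, hw⟩ := card_eq_one.mp (show #(G.neighborFinset v) = 1 by simp; omega)
    have hvw : G.Adj v w := by
      simpa using (hw ▸ mem_singleton_self w : w ∈ G.neighborFinset v)
    have hcover : ∀ ed ∈ G.edgeFinset, v ∈ ed ∨ w ∈ ed := by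
      intro ed hed
      obtain ⟨x, hx, hxv⟩ : ∃ x ∈ ed, x = v ∨ G.Adj v x := by
        by_contra! hnone
        have : ed ∈ G.edgeFinset.filter (fun ed => ∀ x ∈ ed, x ≠ v ∧ ¬ G.Adj v x) :=
          mem_filter.mpr ⟨hed, hnone⟩
        simp [card_eq_zero.mp hfar] at this
      rcases hxv with rfl | hadj
      · exact .inl hx
      · have : x ∈ G.neighborFinset v := by simpa using hadj
        rw [hw, mem_singleton] at this
        exact .inr (this ▸ hx)
    have := G.card_edgeFinset_lt_degree_add_degree hvw hcover
    exact ⟨w, by rcases hdeg w with h | h | h <;> omega⟩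
  · exact ⟨v, by omega⟩
end
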